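/- In the nef-partition setting, let σ* be a proper face of Δ* with dual face σ = {m ∈ Δ | ⟨m,n⟩ = -1 for all n ∈ σ*}, and suppose σ̌ = σ₁* + ⋯ + σ_r* is nonempty. Then σ = σ̌₁* + ⋯ + σ̌_r*, where σ̌* = {m ∈ ∇* | ⟨m,n⟩ = -1 for all n ∈ σ̌} and σ̌_i* = {m ∈ σ̌* | φ̌_i(m) = 1}. -/

import Mathlib

open scoped Pointwise

namespace BB

abbrev V (n : ℕ) : Type := Fin n → ℝ

/-- The standard pairing between `M_ℝ` and `N_ℝ` (both identified with `ℝⁿ`). -/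
def pair {n : ℕ} (m v : V n) : ℝ := ∑ i, m i * v i

/-- A point of `ℝⁿ` is a lattice point if all its coordinates are integers. -/
def IsLatticePt {n : ℕ} (m : V n) : Prop := ∀ i, ∃ z : ℤ, m i = (z : ℝ)

/-- A lattice polytope: convex hull of finitely many lattice points. -/
def IsLatticePolytope {n : ℕ} (P : Set (V n)) : Prop :=
  ∃ S : Finset (V n), (∀ m ∈ S, IsLatticePt m) ∧ P = convexHull ℝ (S : Set (V n))

/-- The polar dual `P* = {v | ⟨m,v⟩ ≥ -1 for all m ∈ P}`. -/
def polar {n : ℕ} (P : Set (V n)) : Set (V n) := {v | ∀ m ∈ P, -1 ≤ pair m v}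

/-- A reflexive polytope: a lattice polytope with `0` in its interior whose polar
dual is again a lattice polytope. -/
def IsReflexive {n : ℕ} (P : Set (V n)) : Prop :=
  IsLatticePolytope P ∧ (0 : V n) ∈ interior P ∧ IsLatticePolytope (polar P)

/-- The support function `supp P v = -inf{⟨m,v⟩ | m ∈ P}`; for `P = Δᵢ` and `v ∈ N_ℝ`
this is the piecewise linear function `φᵢ(v)` of the nef-partition. -/
noncomputable def supp {n : ℕ} (P : Set (V n)) (v : V n) : ℝ :=
  sSup ((fun m => -(pair m v)) '' P)

end BB

/-!
Write `m ∈ σ` as `∑ mᵢ` with `mᵢ ∈ Δᵢ`. For `v ∈ σ*` the chain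
`-1 = ⟨m, v⟩ = ∑ ⟨mᵢ, v⟩ ≥ -∑ φᵢ(v) = -φ(v) ≥ -1` is an equality, so `⟨mᵢ, v⟩ = -φᵢ(v)`.
On the face `{φ = 1}` of `Δ* = conv(vertices)` the convex functions `φᵢ` are affine along
convex combinations of vertices, where they take the values `0, 1`; hence `φᵢ ≥ 0` there and
`⟨mᵢ, σⱼ*⟩ = -δᵢⱼ`. Together with `⟨Δᵢ, ∇ⱼ⟩ ≥ -δᵢⱼ` this puts `mᵢ` in `σ̌ᵢ*`.
Conversely, for `mᵢ ∈ σ̌ᵢ*` the bounds `⟨mᵢ, e⟩ ≥ -φᵢ(e)` at the vertices `e` of `Δ*` give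
`∑ mᵢ ∈ Δ** = Δ`; pairing with the points of `σ̌` in which one summand is replaced by a vertex
`e` of `σ*` forces `⟨∑ mᵢ, e⟩ = -1`, and Krein–Milman extends this to all of `σ*`.
-/

namespace BB

section Pairing

variable {n : ℕ}

lemma pair_eq_dotProduct (m v : V n) : pair m v = m ⬝ᵥ v := rfl

lemma pair_comm (m v : V n) : pair m v = pair v m := dotProduct_comm m v

lemma isLinearMap_pair_left (v : V n) : IsLinearMap ℝ fun m : V n => pair m v :=
  ⟨fun a b => add_dotProduct a b v, fun c a => smul_dotProduct c a v⟩

lemma continuous_pair_left (v : V n) : Continuous fun m : V n => pair m v :=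
  continuous_id.dotProduct continuous_const

lemma pair_sum_left {ι : Type*} (s : Finset ι) (f : ι → V n) (v : V n) :
    pair (∑ i ∈ s, f i) v = ∑ i ∈ s, pair (f i) v :=
  sum_dotProduct s f v

lemma pair_sum_right {ι : Type*} (s : Finset ι) (m : V n) (f : ι → V n) :
    pair m (∑ i ∈ s, f i) = ∑ i ∈ s, pair m (f i) :=
  dotProduct_sum m s f

lemma le_pair_of_mem_convexHull {S : Set (V n)} {m : V n} {c : ℝ} (h : ∀ x ∈ S, c ≤ pair x m)
    {u : V n} (hu : u ∈ convexHull ℝ S) : c ≤ pair u m :=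
  convexHull_min h (convex_halfSpace_ge (isLinearMap_pair_left m) c) hu

lemma neg_pair_eq_dotProductBilin (v : V n) :
    (fun m => -pair m v) = dotProductBilin ℝ ℝ (-v) := by
  ext m
  simp [pair_eq_dotProduct, dotProduct_comm m v]

end Pairing

section Minkowski

variable {ι M : Type*} [AddCommMonoid M]

lemma isCompact_finsetSum [TopologicalSpace M] [ContinuousAdd M] (s : Finset ι) (P : ι → Set M)
    (hP : ∀ i ∈ s, IsCompact (P i)) : IsCompact (∑ i ∈ s, P i) := by
  induction s using Finset.cons_induction with
  | empty => simp
  | cons a s ha ih =>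
    rw [Finset.sum_cons]
    exact (hP a (s.mem_cons_self a)).add (ih fun i hi => hP i (Finset.mem_cons_of_mem hi))

lemma nonempty_finsetSum (s : Finset ι) (P : ι → Set M) (hP : ∀ i ∈ s, (P i).Nonempty) :
    (∑ i ∈ s, P i).Nonempty := by
  choose! g hg using hP
  exact ⟨_, Set.finsetSum_mem_finsetSum s P g hg⟩

variable [Fintype ι] [DecidableEq ι] {P : ι → Set M}

lemma mem_fintypeSum_of_mem (h0 : ∀ j, 0 ∈ P j) {i : ι} {x : M} (hx : x ∈ P i) :
    x ∈ ∑ j, P j := by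
  refine (Set.mem_fintype_sum _ _).2 ⟨Pi.single i x, fun j => ?_, by simp⟩
  rcases eq_or_ne j i with rfl | hj
  · simpa using hx
  · simpa [hj] using h0 j

lemma add_mem_fintypeSum (h0 : ∀ j, 0 ∈ P j) {i k : ι} (hik : i ≠ k) {x y : M}
    (hx : x ∈ P i) (hy : y ∈ P k) : x + y ∈ ∑ j, P j := by
  refine (Set.mem_fintype_sum _ _).2 ⟨Pi.single i x + Pi.single k y, fun j => ?_, ?_⟩
  · rcases eq_or_ne j i with rfl | hji
    · simpa [hik] using hx
    rcases eq_or_ne j k with rfl | hjk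
    · simpa [hji] using hy
    · simpa [hji, hjk] using h0 j
  · simp [Finset.sum_add_distrib]

end Minkowski

lemma eq_zero_of_sum_eq_one {ι : Type*} [Fintype ι] {f : ι → ℝ} (h0 : ∀ j, 0 ≤ f j)
    (h1 : ∑ j, f j = 1) {i j : ι} (hi : f i = 1) (hji : j ≠ i) : f j = 0 := by
  classical
  have := Finset.sum_le_sum_of_subset_of_nonneg (Finset.subset_univ {i, j}) fun k _ _ => h0 k
  rw [Finset.sum_pair hji.symm] at this
  linarith [h0 j]

lemma exists_eq_one_of_sum_eq_one {ι : Type*} [Fintype ι] {f : ι → ℝ}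
    (h : ∀ j, f j = 0 ∨ f j = 1) (h1 : ∑ j, f j = 1) : ∃ i, f i = 1 := by
  by_contra! hf
  simp [fun j => (h j).resolve_right (hf j)] at h1

section Support

variable {n : ℕ} {P : Set (V n)}

lemma bddAbove_image_neg_pair (hP : IsCompact P) (v : V n) :
    BddAbove ((fun m => -pair m v) '' P) :=
  (hP.image (continuous_pair_left v).neg).bddAbove

lemma neg_pair_le_supp (hP : IsCompact P) {m : V n} (hm : m ∈ P) (v : V n) :
    -pair m v ≤ supp P v :=
  le_csSup (bddAbove_image_neg_pair hP v) ⟨m, hm, rfl⟩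

lemma supp_le (hne : P.Nonempty) {v : V n} {c : ℝ} (h : ∀ m ∈ P, -pair m v ≤ c) :
    supp P v ≤ c :=
  csSup_le (hne.image _) (by rintro _ ⟨m, hm, rfl⟩; exact h m hm)

lemma supp_add {A B : Set (V n)} (hA : IsCompact A) (hB : IsCompact B) (hA' : A.Nonempty)
    (hB' : B.Nonempty) (v : V n) : supp (A + B) v = supp A v + supp B v := by
  have hbdd := bddAbove_image_neg_pair (P := A) hA v
  have hbdd' := bddAbove_image_neg_pair (P := B) hB v
  simp only [supp, neg_pair_eq_dotProductBilin] at hbdd hbdd' ⊢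
  rw [Set.image_add, csSup_add (hA'.image _) hbdd (hB'.image _) hbdd']

lemma supp_finsetSum {ι : Type*} (s : Finset ι) (P : ι → Set (V n))
    (hP : ∀ i ∈ s, IsCompact (P i)) (hne : ∀ i ∈ s, (P i).Nonempty) (v : V n) :
    supp (∑ i ∈ s, P i) v = ∑ i ∈ s, supp (P i) v := by
  induction s using Finset.cons_induction with
  | empty => simp [supp, pair_eq_dotProduct]
  | cons a s ha ih =>
    have hP' : ∀ i ∈ s, IsCompact (P i) := fun i hi => hP i (Finset.mem_cons_of_mem hi)
    have hne' : ∀ i ∈ s, (P i).Nonempty := fun i hi => hne i (Finset.mem_cons_of_mem hi)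
    rw [Finset.sum_cons, Finset.sum_cons, ← ih hP' hne',
      supp_add (hP a (s.mem_cons_self a)) (isCompact_finsetSum s P hP')
        (hne a (s.mem_cons_self a)) (nonempty_finsetSum s P hne')]

lemma supp_sum_smul_le (hP : IsCompact P) (hne : P.Nonempty) (s : Finset (V n)) {w : V n → ℝ}
    (hw : ∀ y ∈ s, 0 ≤ w y) : supp P (∑ y ∈ s, w y • y) ≤ ∑ y ∈ s, w y * supp P y := by
  refine supp_le hne fun m hm => ?_
  rw [pair_eq_dotProduct, dotProduct_sum, ← Finset.sum_neg_distrib]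
  refine Finset.sum_le_sum fun y hy => ?_
  rw [dotProduct_smul, smul_eq_mul, ← mul_neg]
  exact mul_le_mul_of_nonneg_left (neg_pair_le_supp hP hm y) (hw y hy)

end Support


section Polar

open Filter Topology

variable {n : ℕ} {P : Set (V n)}

lemma polar_eq_biInter (P : Set (V n)) : polar P = ⋂ m ∈ P, {v | -1 ≤ pair v m} := by
  ext v
  simp [polar, pair_comm v]

lemma isClosed_polar (P : Set (V n)) : IsClosed (polar P) := by
  rw [polar_eq_biInter]
  exact isClosed_biInter fun m _ => isClosed_le continuous_const (continuous_pair_left m)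

lemma convex_polar (P : Set (V n)) : Convex ℝ (polar P) := by
  rw [polar_eq_biInter]
  exact convex_iInter₂ fun m _ => convex_halfSpace_ge (isLinearMap_pair_left m) (-1)

lemma zero_mem_polar (P : Set (V n)) : (0 : V n) ∈ polar P := fun m _ => by
  simp [pair_eq_dotProduct]

lemma supp_le_one_of_mem_polar (hne : P.Nonempty) {v : V n} (hv : v ∈ polar P) :
    supp P v ≤ 1 :=
  supp_le hne fun m hm => by linarith [hv m hm]

lemma smul_mem_polar (hP : IsCompact P) {v : V n} {t : ℝ} (ht : 0 ≤ t) (h : t * supp P v ≤ 1) :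
    t • v ∈ polar P := fun m hm => by
  have := mul_le_mul_of_nonneg_left (neg_pair_le_supp hP hm v) ht
  rw [pair_eq_dotProduct, dotProduct_smul, smul_eq_mul]
  rw [pair_eq_dotProduct] at this
  linarith

lemma polar_polar (hconv : Convex ℝ P) (hcl : IsClosed P) (h0 : (0 : V n) ∈ P) :
    polar (polar P) = P := by
  refine Set.Subset.antisymm (fun x hx => ?_) fun x hx v hv => pair_comm x v ▸ hv x hx
  by_contra hxP
  obtain ⟨f, u, hf, hfx⟩ := geometric_hahn_banach_closed_point hconv hcl hxP
  have hu : 0 < u := by simpa using hf 0 h0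
  set w := (dotProductEquiv ℝ (Fin n)).symm f.toLinearMap
  have hw (a : V n) : pair a w = f a := by
    rw [pair_eq_dotProduct, dotProduct_comm]
    exact congr($((dotProductEquiv ℝ (Fin n)).apply_symm_apply f.toLinearMap) a)
  have hmem : (-u⁻¹) • w ∈ polar P := fun m hm => by
    rw [pair_eq_dotProduct, dotProduct_smul, ← pair_eq_dotProduct, hw, smul_eq_mul, neg_mul,
      neg_le_neg_iff, inv_mul_le_one₀ hu]
    exact (hf m hm).le
  have := hx _ hmem
  rw [pair_comm, pair_eq_dotProduct, dotProduct_smul, ← pair_eq_dotProduct, hw, smul_eq_mul,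
    neg_mul, neg_le_neg_iff, inv_mul_le_one₀ hu] at this
  linarith

lemma isCompact_polar (h0 : (0 : V n) ∈ interior P) : IsCompact (polar P) := by
  obtain ⟨ε, hε, hball⟩ := Metric.mem_nhds_iff.1 (mem_interior_iff_mem_nhds.1 h0)
  refine Metric.isCompact_of_isClosed_isBounded (isClosed_polar P)
    ((Metric.isBounded_closedBall (x := 0) (r := 2 / ε)).subset fun v hv => ?_)
  rw [mem_closedBall_zero_iff, pi_norm_le_iff_of_nonneg (by positivity)]
  intro k
  have hsingle (s : ℝ) (hs : |s| < ε) : Pi.single k s ∈ P :=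
    hball (by simpa [Pi.norm_single] using hs)
  have h₁ := hv _ (hsingle (ε / 2) (by rw [abs_of_pos (half_pos hε)]; linarith))
  have h₂ := hv _ (hsingle (-(ε / 2)) (by rw [abs_neg, abs_of_pos (half_pos hε)]; linarith))
  simp only [pair_eq_dotProduct, single_dotProduct] at h₁ h₂
  have : ε / 2 * |v k| ≤ 1 := by cases abs_cases (v k) <;> nlinarith
  rw [Real.norm_eq_abs, le_div_iff₀ hε]
  linarith

lemma zero_notMem_extremePoints_polar [Nontrivial (V n)] (hP : IsCompact P) :
    (0 : V n) ∉ (polar P).extremePoints ℝ := by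
  intro h0
  obtain ⟨x, hx⟩ := exists_ne (0 : V n)
  set t := (|supp P x| + |supp P (-x)| + 1)⁻¹
  have ht : 0 < t := by positivity
  have hmem (y : V n) (hy : |supp P y| ≤ |supp P x| + |supp P (-x)|) : t • y ∈ polar P :=
    smul_mem_polar hP ht.le <|
      (inv_mul_le_one₀ (by positivity)).2 (by linarith [le_abs_self (supp P y)])
  have hseg : (0 : V n) ∈ openSegment ℝ (t • x) (t • -x) :=
    ⟨1 / 2, 1 / 2, by norm_num, by norm_num, by norm_num, by simp [smul_smul]⟩
  have htx := ((mem_extremePoints.1 h0).2 _ (hmem x (by linarith [abs_nonneg (supp P (-x))])) _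
    (hmem (-x) (by linarith [abs_nonneg (supp P x)])) hseg).1
  exact hx ((smul_eq_zero.1 htx).resolve_left ht.ne')

lemma supp_pos (hP : IsCompact P) (h0 : (0 : V n) ∈ interior P) {v : V n} (hv : v ≠ 0) :
    0 < supp P v := by
  have hcont : Continuous fun t : ℝ => -(t • v) := by fun_prop
  have hev : ∀ᶠ t in 𝓝 (0 : ℝ), -(t • v) ∈ P :=
    hcont.tendsto' 0 0 (by simp) (mem_interior_iff_mem_nhds.1 h0)
  obtain ⟨t, htP, ht⟩ := ((hev.filter_mono nhdsWithin_le_nhds).and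
    (self_mem_nhdsWithin (s := Set.Ioi 0))).exists
  have hvv : 0 < v ⬝ᵥ v :=
    (Finset.sum_nonneg fun i _ => mul_self_nonneg (v i)).lt_of_ne'
      (dotProduct_self_eq_zero.not.2 hv)
  have := neg_pair_le_supp hP htP v
  rw [pair_eq_dotProduct, neg_dotProduct, smul_dotProduct, neg_neg, smul_eq_mul] at this
  have ht' : (0 : ℝ) < t := ht
  nlinarith

lemma supp_eq_one_of_mem_extremePoints_polar [Nontrivial (V n)] (hP : IsCompact P)
    (h0 : (0 : V n) ∈ interior P) {e : V n} (he : e ∈ (polar P).extremePoints ℝ) :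
    supp P e = 1 := by
  have he0 : e ≠ 0 := by
    rintro rfl
    exact zero_notMem_extremePoints_polar hP he
  have hpos := supp_pos hP h0 he0
  refine (supp_le_one_of_mem_polar ⟨0, interior_subset h0⟩ he.1).antisymm
    (not_lt.1 fun hlt => he0 ?_)
  have hmem : (supp P e)⁻¹ • e ∈ polar P :=
    smul_mem_polar hP (inv_nonneg.2 hpos.le) (by rw [inv_mul_cancel₀ hpos.ne'])
  have hseg : e ∈ openSegment ℝ ((supp P e)⁻¹ • e) 0 :=
    ⟨supp P e, 1 - supp P e, hpos, by linarith, by ring, by simp [smul_smul, hpos.ne']⟩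
  exact ((mem_extremePoints.1 he).2 _ hmem _ (zero_mem_polar P) hseg).2.symm

lemma pair_eq_of_forall_mem_extremePoints {K : Set (V n)} (hK : IsCompact K)
    (hconv : Convex ℝ K) {m : V n} {c : ℝ} (h : ∀ e ∈ K.extremePoints ℝ, pair m e = c)
    {v : V n} (hv : v ∈ K) : pair m v = c := by
  have hsub : K ⊆ {x | pair x m = c} := by
    rw [← closure_convexHull_extremePoints hK hconv]
    refine closure_minimal (convexHull_min (fun e he => ?_)
      (convex_hyperplane (isLinearMap_pair_left m) c))
      (isClosed_eq (continuous_pair_left m) continuous_const)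
    exact (pair_comm e m).trans (h e he)
  exact (pair_comm m v).trans (hsub hv)

end Polar


section NefPartition

variable {n r : ℕ}

-- `nefDual D E i` is `∇ᵢ`, `dualFace P F` is the face of `P` dual to `F ⊆ P*`,
-- `facePart D F i` is `Fᵢ = {v ∈ F | φᵢ(v) = 1}`, and `facePartSum D σ*` is `σ̌`.
def nefDual (D : Fin r → Set (V n)) (E : Finset (V n)) (i : Fin r) : Set (V n) :=
  convexHull ℝ ({0} ∪ {e | e ∈ E ∧ supp (D i) e = 1})

def dualFace (P F : Set (V n)) : Set (V n) := {m ∈ P | ∀ v ∈ F, pair m v = -1}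

def facePart (D : Fin r → Set (V n)) (F : Set (V n)) (i : Fin r) : Set (V n) :=
  {v ∈ F | supp (D i) v = 1}

def facePartSum (D : Fin r → Set (V n)) (F : Set (V n)) : Set (V n) := ∑ i, facePart D F i

lemma isCompact_nefDual (D : Fin r → Set (V n)) (E : Finset (V n)) (i : Fin r) :
    IsCompact (nefDual D E i) :=
  ((Set.finite_singleton 0).union (E.finite_toSet.subset fun _ he => he.1)).isCompact_convexHull
    (𝕜 := ℝ)

lemma zero_mem_nefDual (D : Fin r → Set (V n)) (E : Finset (V n)) (i : Fin r) :
    (0 : V n) ∈ nefDual D E i :=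
  subset_convexHull ℝ _ (Or.inl rfl)

lemma mem_nefDual {D : Fin r → Set (V n)} {E : Finset (V n)} {i : Fin r} {e : V n} (he : e ∈ E)
    (hi : supp (D i) e = 1) : e ∈ nefDual D E i :=
  subset_convexHull ℝ _ (Or.inr ⟨he, hi⟩)

/-- `E` is the vertex set of `Δ*`; the fields are the properties of the nef-partition
`Δ = ∑ i, D i` that the duality of faces uses. -/
structure IsNefPartition (Δ : Set (V n)) (D : Fin r → Set (V n)) (E : Finset (V n)) : Prop where
  sum_eq : Δ = ∑ i, D i
  isCompact : ∀ i, IsCompact (D i)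
  nonempty : ∀ i, (D i).Nonempty
  polar_polar : polar (polar Δ) = Δ
  isCompact_polar : IsCompact (polar Δ)
  extremePoints_polar : (polar Δ).extremePoints ℝ = E
  supp_vertex_mem : ∀ i, ∀ e ∈ E, supp (D i) e = 0 ∨ supp (D i) e = 1
  supp_vertex : ∀ e ∈ E, supp Δ e = 1

namespace IsNefPartition

variable {Δ : Set (V n)} {D : Fin r → Set (V n)} {E : Finset (V n)}

lemma supp_eq_sum (h : IsNefPartition Δ D E) (v : V n) : supp Δ v = ∑ i, supp (D i) v := by
  rw [h.sum_eq]
  exact supp_finsetSum _ _ (fun i _ => h.isCompact i) (fun i _ => h.nonempty i) v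

lemma polar_eq_convexHull (h : IsNefPartition Δ D E) : polar Δ = convexHull ℝ E := by
  rw [← (E.finite_toSet.isCompact_convexHull (𝕜 := ℝ)).isClosed.closure_eq, ← h.extremePoints_polar,
    closure_convexHull_extremePoints h.isCompact_polar (convex_polar Δ)]

lemma mem_polar (h : IsNefPartition Δ D E) {e : V n} (he : e ∈ E) : e ∈ polar Δ :=
  h.polar_eq_convexHull ▸ subset_convexHull ℝ _ he

lemma exists_supp_vertex_eq_one (h : IsNefPartition Δ D E) {e : V n} (he : e ∈ E) :
    ∃ i, supp (D i) e = 1 :=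
  exists_eq_one_of_sum_eq_one (h.supp_vertex_mem · e he)
    (by rw [← h.supp_eq_sum, h.supp_vertex e he])

/-- Each `supp (D i)` is convex and their sum is constant on the face `{supp Δ = 1}` of `Δ*`, so
every convexity inequality is an equality there. -/
lemma supp_eq_sum_weights (h : IsNefPartition Δ D E) {w : V n → ℝ} (hw₀ : ∀ y ∈ E, 0 ≤ w y)
    (hw₁ : ∑ y ∈ E, w y = 1) (hv₁ : supp Δ (∑ y ∈ E, w y • y) = 1) (i : Fin r) :
    supp (D i) (∑ y ∈ E, w y • y) = ∑ y ∈ E, w y * supp (D i) y := by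
  have hle (j : Fin r) := supp_sum_smul_le (h.isCompact j) (h.nonempty j) E hw₀
  have hsum : ∑ j, ∑ y ∈ E, w y * supp (D j) y = ∑ j, supp (D j) (∑ y ∈ E, w y • y) := by
    rw [Finset.sum_comm, ← h.supp_eq_sum, hv₁, ← hw₁]
    refine Finset.sum_congr rfl fun y hy => ?_
    rw [← Finset.mul_sum, ← h.supp_eq_sum, h.supp_vertex y hy, mul_one]
  exact (Finset.sum_eq_sum_iff_of_le fun j _ => hle j).1 hsum.symm i (Finset.mem_univ i)

lemma supp_nonneg (h : IsNefPartition Δ D E) {v : V n} (hv : v ∈ polar Δ) (hv₁ : supp Δ v = 1)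
    (i : Fin r) : 0 ≤ supp (D i) v := by
  obtain ⟨w, hw₀, hw₁, rfl⟩ := Finset.mem_convexHull'.1 (h.polar_eq_convexHull ▸ hv)
  rw [h.supp_eq_sum_weights hw₀ hw₁ hv₁]
  refine Finset.sum_nonneg fun y hy => mul_nonneg (hw₀ y hy) ?_
  rcases h.supp_vertex_mem i y hy with h0 | h1 <;> simp [*]

lemma supp_eq_ite (h : IsNefPartition Δ D E) {v : V n} (hv : v ∈ polar Δ) (hv₁ : supp Δ v = 1)
    {j : Fin r} (hj : supp (D j) v = 1) (i : Fin r) : supp (D i) v = if i = j then 1 else 0 := by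
  split_ifs with hij
  · rwa [hij]
  · exact eq_zero_of_sum_eq_one (f := fun k => supp (D k) v) (h.supp_nonneg hv hv₁)
      (by rw [← h.supp_eq_sum, hv₁]) hj hij

lemma neg_ite_le_pair_of_mem_nefDual (h : IsNefPartition Δ D E) {i j : Fin r} {m u : V n}
    (hm : m ∈ D i) (hu : u ∈ nefDual D E j) : (if i = j then -1 else 0 : ℝ) ≤ pair u m := by
  refine le_pair_of_mem_convexHull ?_ hu
  rintro x (rfl | ⟨hx, hxj⟩)
  · split_ifs <;> simp [pair_eq_dotProduct]
  · have := neg_pair_le_supp (h.isCompact i) hm x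
    rw [h.supp_eq_ite (h.mem_polar hx) (h.supp_vertex x hx) hxj i, pair_comm] at this
    split_ifs at this ⊢ <;> linarith

lemma mem_polar_sum_nefDual (h : IsNefPartition Δ D E) {i : Fin r} {m : V n} (hm : m ∈ D i) :
    m ∈ polar (∑ j, nefDual D E j) := by
  intro u hu
  obtain ⟨g, hg, rfl⟩ := (Set.mem_fintype_sum _ _).1 hu
  rw [pair_sum_left]
  calc (-1 : ℝ) = ∑ j, if i = j then -1 else 0 := by simp
    _ ≤ ∑ j, pair (g j) m := Finset.sum_le_sum fun j _ => h.neg_ite_le_pair_of_mem_nefDual hm (hg j)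

lemma exists_vertex_pair_eq_neg_one (h : IsNefPartition Δ D E) {v : V n} (hv : v ∈ polar Δ)
    (hv₁ : supp Δ v = 1) {i : Fin r} (hvi : supp (D i) v = 1) {m : V n} (hm : m ∈ D i)
    (hmv : pair m v = -1) : ∃ e ∈ E, supp (D i) e = 1 ∧ pair m e = -1 := by
  obtain ⟨w, hw₀, hw₁, rfl⟩ := Finset.mem_convexHull'.1 (h.polar_eq_convexHull ▸ hv)
  have hsupp := h.supp_eq_sum_weights hw₀ hw₁ hv₁ i
  have hgap (y : V n) : 0 ≤ pair m y + supp (D i) y := by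
    linarith [neg_pair_le_supp (h.isCompact i) hm y]
  have hpair : ∑ y ∈ E, w y * pair m y = pair m (∑ y ∈ E, w y • y) := by
    rw [pair_sum_right]
    simp only [pair_eq_dotProduct, dotProduct_smul, smul_eq_mul]
  have hzero : ∑ y ∈ E, w y * (pair m y + supp (D i) y) = 0 := by
    rw [Finset.sum_congr rfl fun y _ => mul_add _ _ _, Finset.sum_add_distrib, hpair, ← hsupp,
      hmv, hvi]
    norm_num
  obtain ⟨y, hy, hwy⟩ : ∃ y ∈ E, w y * supp (D i) y ≠ 0 :=
    Finset.exists_ne_zero_of_sum_ne_zero (by rw [← hsupp, hvi]; exact one_ne_zero)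
  have hyi : supp (D i) y = 1 := (h.supp_vertex_mem i y hy).resolve_left fun h0 => by simp_all
  have hterm := (Finset.sum_eq_zero_iff_of_nonneg fun y hy => mul_nonneg (hw₀ y hy) (hgap y)).1
    hzero y hy
  refine ⟨y, hy, hyi, ?_⟩
  rw [mul_eq_zero, or_iff_right (left_ne_zero_of_mul hwy), hyi] at hterm
  linarith

lemma supp_nefDual_eq_one (h : IsNefPartition Δ D E) {v : V n} (hv : v ∈ polar Δ)
    (hv₁ : supp Δ v = 1) {i : Fin r} (hvi : supp (D i) v = 1) {m : V n} (hm : m ∈ D i)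
    (hmv : pair m v = -1) : supp (nefDual D E i) m = 1 := by
  refine le_antisymm (supp_le ⟨0, zero_mem_nefDual D E i⟩ fun u hu => ?_) ?_
  · have := h.neg_ite_le_pair_of_mem_nefDual hm hu
    rw [if_pos rfl] at this
    linarith
  · obtain ⟨e, he, hei, hme⟩ := h.exists_vertex_pair_eq_neg_one hv hv₁ hvi hm hmv
    have := neg_pair_le_supp (isCompact_nefDual D E i) (mem_nefDual he hei) m
    rw [pair_comm, hme] at this
    linarith

lemma pair_eq_neg_supp_of_pair_sum (h : IsNefPartition Δ D E) {m : Fin r → V n}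
    (hm : ∀ i, m i ∈ D i) {v : V n} (hv : v ∈ polar Δ) (hmv : pair (∑ i, m i) v = -1) :
    supp Δ v = 1 ∧ ∀ i, pair (m i) v = -supp (D i) v := by
  have hlow (i : Fin r) : -supp (D i) v ≤ pair (m i) v := by
    linarith [neg_pair_le_supp (h.isCompact i) (hm i) v]
  have hsum : ∑ i, -supp (D i) v = -supp Δ v := by rw [h.supp_eq_sum, Finset.sum_neg_distrib]
  rw [pair_sum_left] at hmv
  have hv₁ : supp Δ v = 1 := by
    linarith [supp_le_one_of_mem_polar ⟨0, h.polar_polar ▸ zero_mem_polar _⟩ hv,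
      Finset.sum_le_sum fun i (_ : i ∈ Finset.univ) => hlow i]
  refine ⟨hv₁, fun i => ((Finset.sum_eq_sum_iff_of_le fun i _ => hlow i).1 ?_ i
    (Finset.mem_univ i)).symm⟩
  rw [hsum, hmv, hv₁]

lemma neg_supp_le_pair_of_mem_polar (h : IsNefPartition Δ D E) {i : Fin r} {m : V n}
    (hm : m ∈ polar (∑ j, nefDual D E j)) (hmi : supp (nefDual D E i) m = 1) {e : V n}
    (he : e ∈ E) : -supp (D i) e ≤ pair e m := by
  have h0 := zero_mem_nefDual D E
  rcases h.supp_vertex_mem i e he with hi | hi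
  · obtain ⟨k, hk⟩ := h.exists_supp_vertex_eq_one he
    have hik : i ≠ k := by rintro rfl; simp_all
    have hle : supp (nefDual D E i) m ≤ 1 + pair e m := supp_le ⟨0, h0 i⟩ fun u hu => by
      have := hm _ (add_mem_fintypeSum h0 hik hu (mem_nefDual he hk))
      rw [pair_eq_dotProduct, add_dotProduct] at this
      rw [pair_eq_dotProduct, pair_eq_dotProduct]
      linarith
    linarith
  · rw [hi]
    exact hm e (mem_fintypeSum_of_mem h0 (mem_nefDual he hi))

lemma sum_mem_of_mem_polar (h : IsNefPartition Δ D E) {m : Fin r → V n}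
    (hm : ∀ i, m i ∈ polar (∑ j, nefDual D E j)) (hmi : ∀ i, supp (nefDual D E i) (m i) = 1) :
    ∑ i, m i ∈ Δ := by
  rw [← h.polar_polar]
  intro v hv
  rw [h.polar_eq_convexHull] at hv
  refine le_pair_of_mem_convexHull (fun e he => ?_) hv
  calc (-1 : ℝ) = ∑ i, -supp (D i) e := by
        rw [Finset.sum_neg_distrib, ← h.supp_eq_sum, h.supp_vertex e he]
    _ ≤ ∑ i, pair e (m i) :=
        Finset.sum_le_sum fun i _ => h.neg_supp_le_pair_of_mem_polar (hm i) (hmi i) he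
    _ = pair e (∑ i, m i) := (pair_sum_right _ _ _).symm

lemma dualFace_subset (h : IsNefPartition Δ D E) {σ : Set (V n)} (hσ : σ ⊆ polar Δ)
    (hne : (facePartSum D σ).Nonempty) :
    dualFace Δ σ ⊆
      facePartSum (nefDual D E) (dualFace (polar (∑ j, nefDual D E j)) (facePartSum D σ)) := by
  rintro x ⟨hxΔ, hxσ⟩
  obtain ⟨m, hm, rfl⟩ := (Set.mem_fintype_sum _ _).1 (h.sum_eq ▸ hxΔ)
  obtain ⟨g, hg, -⟩ := (Set.mem_fintype_sum _ _).1 hne.some_mem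
  have hsplit (v : V n) (hv : v ∈ σ) := h.pair_eq_neg_supp_of_pair_sum hm (hσ hv) (hxσ v hv)
  have hdelta (i j : Fin r) (v : V n) (hv : v ∈ facePart D σ j) :
      pair (m i) v = if i = j then -1 else 0 := by
    rw [(hsplit v hv.1).2 i, h.supp_eq_ite (hσ hv.1) (hsplit v hv.1).1 hv.2 i]
    split_ifs <;> norm_num
  refine (Set.mem_fintype_sum _ _).2 ⟨m, fun i => ⟨⟨h.mem_polar_sum_nefDual (hm i), ?_⟩, ?_⟩, rfl⟩
  · intro w hw
    obtain ⟨g', hg', rfl⟩ := (Set.mem_fintype_sum _ _).1 hw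
    simp [pair_sum_right, hdelta i _ _ (hg' _)]
  · exact h.supp_nefDual_eq_one (hσ (hg i).1) (hsplit _ (hg i).1).1 (hg i).2 (hm i)
      (by simpa using hdelta i i _ (hg i))

lemma subset_dualFace (h : IsNefPartition Δ D E) {σ : Set (V n)} (hσ : IsExposed ℝ (polar Δ) σ)
    (hne : (facePartSum D σ).Nonempty) :
    facePartSum (nefDual D E) (dualFace (polar (∑ j, nefDual D E j)) (facePartSum D σ)) ⊆
      dualFace Δ σ := by
  classical
  intro x hx
  obtain ⟨m, hm, rfl⟩ := (Set.mem_fintype_sum _ _).1 hx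
  obtain ⟨g, hg, -⟩ := (Set.mem_fintype_sum _ _).1 hne.some_mem
  have hxΔ : ∑ i, m i ∈ Δ := h.sum_mem_of_mem_polar (fun i => (hm i).1.1) fun i => (hm i).2
  refine ⟨hxΔ, fun v hv => pair_eq_of_forall_mem_extremePoints
    (h.isCompact_polar.of_isClosed_subset (hσ.isClosed (isClosed_polar Δ)) hσ.subset)
    (hσ.convex (convex_polar Δ)) (fun e he => ?_) hv⟩
  have heE : e ∈ E := by
    rw [← Finset.mem_coe, ← h.extremePoints_polar]
    exact hσ.isExtreme.extremePoints_subset_extremePoints he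
  obtain ⟨k, hk⟩ := h.exists_supp_vertex_eq_one heE
  -- `∑ g'` lies in `facePartSum D σ`, so `⟨x, ∑ g'⟩ = -r` while each `⟨x, g' j⟩ ≥ -1`
  set g' := Function.update g k e
  have hg' (j : Fin r) : g' j ∈ facePart D σ j := by
    rcases eq_or_ne j k with rfl | hj
    · simpa [g'] using ⟨he.1, hk⟩
    · simpa [g', hj] using hg j
  have hsum : ∑ j, pair (∑ i, m i) (g' j) = ∑ _j : Fin r, (-1 : ℝ) := by
    rw [← pair_sum_right, pair_sum_left]
    exact Finset.sum_congr rfl fun i _ =>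
      (hm i).1.2 _ (Set.finsetSum_mem_finsetSum _ _ _ fun j _ => hg' j)
  have := (Finset.sum_eq_sum_iff_of_le fun j _ => hσ.subset (hg' j).1 _ hxΔ).1 hsum.symm k
    (Finset.mem_univ k)
  simpa [g'] using this.symm

lemma dualFace_eq (h : IsNefPartition Δ D E) {σ : Set (V n)} (hσ : IsExposed ℝ (polar Δ) σ)
    (hne : (facePartSum D σ).Nonempty) :
    dualFace Δ σ =
      facePartSum (nefDual D E) (dualFace (polar (∑ j, nefDual D E j)) (facePartSum D σ)) :=
  (h.dualFace_subset hσ.subset hne).antisymm (h.subset_dualFace hσ hne)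

end IsNefPartition

lemma IsLatticePolytope.isCompact {P : Set (V n)} (hP : IsLatticePolytope P) : IsCompact P := by
  obtain ⟨S, -, rfl⟩ := hP
  exact S.finite_toSet.isCompact_convexHull (𝕜 := ℝ)

lemma IsLatticePolytope.convex {P : Set (V n)} (hP : IsLatticePolytope P) : Convex ℝ P := by
  obtain ⟨S, -, rfl⟩ := hP
  exact convex_convexHull ℝ _

lemma isNefPartition_of_isReflexive [Nontrivial (V n)] {Δ : Set (V n)} {D : Fin r → Set (V n)}
    (hΔ : IsReflexive Δ) (hD : ∀ i, IsLatticePolytope (D i)) (hsum : Δ = ∑ i, D i)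
    {E : Finset (V n)} (hE : (E : Set (V n)) = (polar Δ).extremePoints ℝ)
    (hnef : ∀ i, ∀ e ∈ E, supp (D i) e = 0 ∨ supp (D i) e = 1) : IsNefPartition Δ D E := by
  obtain ⟨hlat, h0, -⟩ := hΔ
  have hΔ0 : (0 : V n) ∈ Δ := interior_subset h0
  obtain ⟨g, hg, -⟩ := (Set.mem_fintype_sum _ _).1 (hsum ▸ hΔ0)
  exact
    { sum_eq := hsum
      isCompact := fun i => (hD i).isCompact
      nonempty := fun i => ⟨g i, hg i⟩
      polar_polar := polar_polar hlat.convex hlat.isCompact.isClosed hΔ0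
      isCompact_polar := isCompact_polar h0
      extremePoints_polar := hE.symm
      supp_vertex_mem := hnef
      supp_vertex := fun e he =>
        supp_eq_one_of_mem_extremePoints_polar hlat.isCompact h0 (hE ▸ he) }

lemma isEmpty_and_eq_empty_of_subsingleton [Subsingleton (V n)] {Δ σ : Set (V n)}
    {D : Fin r → Set (V n)} (hσ : σ ≠ polar Δ) (hne : (facePartSum D σ).Nonempty) :
    IsEmpty (Fin r) ∧ σ = ∅ := by
  have hσ₀ : σ = ∅ := σ.eq_empty_or_nonempty.resolve_right fun ⟨x, hx⟩ => hσ <|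
    Set.ext fun y => iff_of_true (Subsingleton.elim x y ▸ hx)
      (Subsingleton.elim 0 y ▸ zero_mem_polar Δ)
  obtain ⟨g, hg, -⟩ := (Set.mem_fintype_sum _ _).1 hne.some_mem
  exact ⟨⟨fun i => by simpa [hσ₀] using (hg i).1⟩, hσ₀⟩

end NefPartition

/-- `F` is a face of the convex set `P` (an exposed subset). -/
def IsFaceOf {n : ℕ} (F P : Set (V n)) : Prop := IsExposed ℝ P F

theorem stmt3 {n r : ℕ} (Δ : Set (V n)) (D : Fin r → Set (V n))
    (hΔrefl : IsReflexive Δ)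
    (hDlat : ∀ i, IsLatticePolytope (D i))
    (hΔ : Δ = ∑ i, D i)
    (E : Finset (V n))
    (hE : (E : Set (V n)) = Set.extremePoints ℝ (polar Δ))
    (hnef : ∀ i, ∀ e ∈ E, supp (D i) e = 0 ∨ supp (D i) e = 1)
    (Nb : Fin r → Set (V n))
    (hNb : ∀ i, Nb i = convexHull ℝ ({0} ∪ {e : V n | e ∈ E ∧ supp (D i) e = 1}))
    -- a proper face σ* of Δ*
    (σs : Set (V n))
    (hface : IsFaceOf σs (polar Δ))
    (hproper : σs ≠ polar Δ)
    -- σ̌ = σ₁* + ⋯ + σ_r*, assumed nonempty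
    (chk : Set (V n))
    (hchkdef : chk = ∑ i, {v ∈ σs | supp (D i) v = 1})
    (hchkne : chk.Nonempty)
    -- σ̌* = {m ∈ ∇* | ⟨m,n⟩ = -1 for all n ∈ σ̌}
    (chks : Set (V n))
    (hchks : chks = {m ∈ polar (∑ i, Nb i) | ∀ v ∈ chk, pair m v = -1}) :
    -- σ = σ̌₁* + ⋯ + σ̌_r*, where σ is the face of Δ dual to σ*
    {m ∈ Δ | ∀ v ∈ σs, pair m v = -1}
      = ∑ i, {m ∈ chks | supp (Nb i) m = 1} := by
  obtain rfl : Nb = nefDual D E := funext hNb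
  subst hchkdef hchks
  -- in dimension `0` the only vertex of `Δ*` is `0`, where `supp Δ` vanishes
  rcases subsingleton_or_nontrivial (V n) with hn | hn
  · obtain ⟨hr, rfl⟩ := isEmpty_and_eq_empty_of_subsingleton hproper hchkne
    simp [hΔ, Set.singleton_zero]
  · exact (isNefPartition_of_isReflexive hΔrefl hDlat hΔ hE hnef).dualFace_eq hface hchkne

end BB
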